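/- For every fixed r > 0, the function μ ↦ S_μ(r) is log-convex on (0,∞): for all μ₁, μ₂ > 0 and α ∈ [0,1], S_{αμ₁+(1−α)μ₂}(r) ≤ S_{μ₁}(r)^α · S_{μ₂}(r)^{1−α}. -/

import Mathlib

/-!
Each term of the Mathieu series is `c / b ^ (μ + 1)` with `c, b > 0` independent of `μ`, so it is
log-affine in `μ`: at `αμ₁ + (1-α)μ₂` it equals the weighted geometric mean of its values at `μ₁`
and `μ₂`. Hölder's inequality with exponents `1/α` and `1/(1-α)` bounds the sum of these geometric
means by the geometric mean of the two sums.
-/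

open Real

noncomputable def mathieuS (μ r : ℝ) : ℝ :=
  ∑' n : ℕ, (2 * ((n : ℝ) + 1)) / ((((n : ℝ) + 1) ^ 2 + r ^ 2) ^ (μ + 1))

noncomputable def zetaR (s : ℝ) : ℝ := ∑' n : ℕ, ((n : ℝ) + 1) ^ (-s)

theorem Real.tsum_rpow_mul_rpow_le_of_nonneg {ι : Type*} {f g : ι → ℝ} (hf : ∀ i, 0 ≤ f i)
    (hg : ∀ i, 0 ≤ g i) (hf_sum : Summable f) (hg_sum : Summable g) {α : ℝ} (hα₀ : 0 ≤ α)
    (hα₁ : α ≤ 1) :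
    ∑' i, f i ^ α * g i ^ (1 - α) ≤ (∑' i, f i) ^ α * (∑' i, g i) ^ (1 - α) := by
  rcases hα₀.eq_or_lt with rfl | hα₀
  · simp
  rcases hα₁.eq_or_lt with rfl | hα₁
  · simp
  have hpq : α⁻¹.HolderConjugate (1 - α)⁻¹ :=
    HolderConjugate.inv_inv hα₀ (sub_pos.2 hα₁) (add_sub_cancel α 1)
  have holder := inner_le_Lp_mul_Lq_tsum_of_nonneg hpq (fun i ↦ rpow_nonneg (hf i) α)
    (fun i ↦ rpow_nonneg (hg i) (1 - α))
    (by simpa [rpow_rpow_inv (hf _) hα₀.ne'] using hf_sum)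
    (by simpa [rpow_rpow_inv (hg _) (sub_pos.2 hα₁).ne'] using hg_sum)
  simpa [rpow_rpow_inv (hf _) hα₀.ne', rpow_rpow_inv (hg _) (sub_pos.2 hα₁).ne'] using holder

theorem Real.div_rpow_convexComb {c b : ℝ} (hc : 0 ≤ c) (hb : 0 < b) (α s t : ℝ) :
    c / b ^ (α * s + (1 - α) * t) = (c / b ^ s) ^ α * (c / b ^ t) ^ (1 - α) := by
  rw [div_rpow hc (rpow_nonneg hb.le _), div_rpow hc (rpow_nonneg hb.le _), div_mul_div_comm,
    ← rpow_add' hc (by simp), ← rpow_mul hb.le, ← rpow_mul hb.le, ← rpow_add hb,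
    add_sub_cancel, rpow_one]
  ring_nf

noncomputable def mathieuTerm (μ r : ℝ) (n : ℕ) : ℝ :=
  (2 * ((n : ℝ) + 1)) / ((((n : ℝ) + 1) ^ 2 + r ^ 2) ^ (μ + 1))

theorem mathieuS_eq_tsum (μ r : ℝ) : mathieuS μ r = ∑' n, mathieuTerm μ r n := rfl

theorem mathieuTerm_nonneg (μ r : ℝ) (n : ℕ) : 0 ≤ mathieuTerm μ r n := by
  unfold mathieuTerm
  positivity

-- The majorant is written in the shape of `Real.summable_one_div_nat_add_rpow`.
theorem mathieuTerm_le (μ r : ℝ) (hμ : -1 ≤ μ) (n : ℕ) :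
    mathieuTerm μ r n ≤ 2 * (1 / |(n : ℝ) + 1| ^ (2 * μ + 1)) := by
  set x : ℝ := (n : ℝ) + 1
  have hx : 0 < x := by positivity
  have hpow : x ^ (2 * μ + 1) * x = (x ^ 2) ^ (μ + 1) := by
    rw [← rpow_natCast, ← rpow_mul hx.le, ← rpow_add_one hx.ne']
    push_cast
    ring_nf
  calc mathieuTerm μ r n ≤ 2 * x / (x ^ 2) ^ (μ + 1) := by
        unfold mathieuTerm
        gcongr
        · linarith
        · exact le_add_of_nonneg_right (sq_nonneg r)
    _ = 2 * (1 / |x| ^ (2 * μ + 1)) := by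
        rw [abs_of_pos hx, ← hpow]
        field_simp

theorem summable_mathieuTerm (r : ℝ) {μ : ℝ} (hμ : 0 < μ) : Summable (mathieuTerm μ r) :=
  Summable.of_nonneg_of_le (mathieuTerm_nonneg μ r) (mathieuTerm_le μ r (by linarith))
    (((summable_one_div_nat_add_rpow 1 _).2 (by linarith)).mul_left 2)

theorem mathieuTerm_convexComb (μ₁ μ₂ α r : ℝ) (n : ℕ) :
    mathieuTerm (α * μ₁ + (1 - α) * μ₂) r n =
      mathieuTerm μ₁ r n ^ α * mathieuTerm μ₂ r n ^ (1 - α) := by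
  unfold mathieuTerm
  rw [← div_rpow_convexComb (by positivity) (by positivity)]
  ring_nf

theorem stmt2_general (r : ℝ) (μ₁ μ₂ α : ℝ) (h₁ : 0 < μ₁) (h₂ : 0 < μ₂)
    (hα : α ∈ Set.Icc (0 : ℝ) 1) :
    mathieuS (α * μ₁ + (1 - α) * μ₂) r ≤ mathieuS μ₁ r ^ α * mathieuS μ₂ r ^ (1 - α) := by
  simp only [mathieuS_eq_tsum, mathieuTerm_convexComb]
  exact tsum_rpow_mul_rpow_le_of_nonneg (mathieuTerm_nonneg μ₁ r) (mathieuTerm_nonneg μ₂ r)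
    (summable_mathieuTerm r h₁) (summable_mathieuTerm r h₂) hα.1 hα.2

theorem stmt2 (r : ℝ) (hr : 0 < r) (μ₁ μ₂ α : ℝ) (h₁ : 0 < μ₁) (h₂ : 0 < μ₂)
    (hα : α ∈ Set.Icc (0 : ℝ) 1) :
    mathieuS (α * μ₁ + (1 - α) * μ₂) r ≤ mathieuS μ₁ r ^ α * mathieuS μ₂ r ^ (1 - α) :=
  stmt2_general r μ₁ μ₂ α h₁ h₂ hα
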